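/- Let 𝕋 be an evolutionary semigroup with homogeneous expectation operator 𝔼, and write ℙ^x for the probability measure k(x,·) where k is the kernel of 𝔼. Then for every bounded measurable F and t ≥ 0, the conditional expectation of F given ℱ_{t−} under ℙ^x is ℙ^x-a.s. equal to 𝔼_t F, where 𝔼_t = Θ_t 𝔼 Θ_{−t}. -/

import Mathlib

open MeasureTheory Set Filter Topology
open scoped ENNReal

/-- The σ-algebra on a set `𝒳` of paths `ℝ → X` generated by the evaluation maps
`π_t : x ↦ x t` for `t ∈ I`. -/
def evalSigma {X : Type*} [m : MeasurableSpace X] (𝒳 : Set (ℝ → X)) (I : Set ℝ) :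
    MeasurableSpace 𝒳 :=
  ⨆ t ∈ I, MeasurableSpace.comap (fun x : 𝒳 => x.1 t) m

/-!
`ℱ_{t−}` is `evalSigma 𝒳 (Iio t)`. For `A ∈ ℱ_{t−}` the set `B = ϑ_{-t}⁻¹ A` lies in `ℱ_{0−}`,
and a homogeneous expectation fixes `ℱ_{0−}`-measurable functions, so `k(w, ·)` gives `B`
mass `1_B(w)`. Hence `𝔼` commutes with multiplication by `1_B`, and conjugating by the shift,
`1_A · 𝔼_t F = 𝔼_t (1_A F)`. Integrating against `ℙ^x` and using `𝔼 𝔼_t = 𝔼` gives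
`∫_A 𝔼_t F dℙ^x = ∫ 1_A F dℙ^x`.
-/

lemma integral_indicator_of_measureReal_eq_indicator {α : Type*} {mα : MeasurableSpace α}
    {μ : Measure α} [IsProbabilityMeasure μ] {B : Set α} (hB : MeasurableSet B) {w : α}
    (hμB : μ.real B = B.indicator 1 w) (G : α → ℝ) :
    ∫ z, B.indicator G z ∂μ = B.indicator (fun _ => ∫ z, G z ∂μ) w := by
  rw [integral_indicator hB]
  by_cases hw : w ∈ B
  · have hfull : μ B = 1 :=
      (ENNReal.toReal_eq_one_iff _).1 (by simpa [hw, measureReal_def] using hμB)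
    rw [indicator_of_mem hw,
      Measure.restrict_eq_self_of_ae_mem ((mem_ae_iff_prob_eq_one hB).2 hfull)]
  · have hnull : μ B = 0 := (measureReal_eq_zero_iff).1 (by simpa [hw] using hμB)
    rw [indicator_of_notMem hw, Measure.restrict_eq_zero.2 hnull, integral_zero_measure]

section

variable {X : Type*} [MeasurableSpace X] {𝒳 : Set (ℝ → X)}

lemma evalSigma_mono {I J : Set ℝ} (h : I ⊆ J) : evalSigma 𝒳 I ≤ evalSigma 𝒳 J :=
  biSup_mono h

/-- The operator `𝔼_t = Θ_t 𝔼 Θ_{-t}`. -/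
noncomputable def shiftedExpectation (k : 𝒳 → @Measure 𝒳 (evalSigma 𝒳 univ))
    (ϑ : ℝ → 𝒳 → 𝒳) (t : ℝ) (F : 𝒳 → ℝ) (y : 𝒳) : ℝ :=
  ∫ z, F (ϑ (-t) z) ∂(k (ϑ t y))

variable {k : 𝒳 → @Measure 𝒳 (evalSigma 𝒳 univ)} {ϑ : ℝ → 𝒳 → 𝒳}

lemma measurable_shift_of_image_eq
    (hϑmeas : ∀ (s : ℝ) (I : Set ℝ),
      Measurable[evalSigma 𝒳 ((fun r => r + s) '' I), evalSigma 𝒳 I] (ϑ s))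
    {s : ℝ} {I J : Set ℝ} (h : (fun r => r + s) '' I = J) :
    Measurable[evalSigma 𝒳 J, evalSigma 𝒳 I] (ϑ s) :=
  h ▸ hϑmeas s I

lemma measurable_shiftedExpectation
    (hϑmeas : ∀ (s : ℝ) (I : Set ℝ),
      Measurable[evalSigma 𝒳 ((fun r => r + s) '' I), evalSigma 𝒳 I] (ϑ s))
    (hEmeas : ∀ F : 𝒳 → ℝ, (∃ C, ∀ x, |F x| ≤ C) → Measurable[evalSigma 𝒳 univ] F →
      Measurable[evalSigma 𝒳 (Iio 0)] (fun x => ∫ y, F y ∂(k x)))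
    {F : 𝒳 → ℝ} (hFbd : ∃ C, ∀ x, |F x| ≤ C) (hFmeas : Measurable[evalSigma 𝒳 univ] F)
    (t : ℝ) : Measurable[evalSigma 𝒳 (Iio t)] (shiftedExpectation k ϑ t F) := by
  have hshift_neg : Measurable[evalSigma 𝒳 univ, evalSigma 𝒳 univ] (ϑ (-t)) :=
    measurable_shift_of_image_eq hϑmeas (image_univ_of_surjective (add_right_surjective _))
  have hshift : Measurable[evalSigma 𝒳 (Iio t), evalSigma 𝒳 (Iio 0)] (ϑ t) :=
    measurable_shift_of_image_eq hϑmeas (by simp [image_add_right])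
  obtain ⟨C, hC⟩ := hFbd
  exact (hEmeas _ ⟨C, fun z => hC _⟩ (hFmeas.comp hshift_neg)).comp hshift

lemma measureReal_eq_indicator_one_of_measurable_Iio_zero
    (hEproj : ∀ F : 𝒳 → ℝ, (∃ C, ∀ x, |F x| ≤ C) → Measurable[evalSigma 𝒳 (Iio 0)] F →
      ∀ x, ∫ y, F y ∂(k x) = F x)
    {B : Set 𝒳} (hB : MeasurableSet[evalSigma 𝒳 (Iio 0)] B) (w : 𝒳) :
    (k w).real B = B.indicator 1 w := by
  have hbd : ∃ C, ∀ z, |B.indicator (1 : 𝒳 → ℝ) z| ≤ C :=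
    ⟨1, fun z => by by_cases hz : z ∈ B <;> simp [hz]⟩
  rw [← hEproj _ hbd (measurable_const.indicator hB) w,
    integral_indicator_one (evalSigma_mono (subset_univ _) _ hB)]

lemma shiftedExpectation_indicator [∀ x, IsProbabilityMeasure (k x)]
    (hϑmeas : ∀ (s : ℝ) (I : Set ℝ),
      Measurable[evalSigma 𝒳 ((fun r => r + s) '' I), evalSigma 𝒳 I] (ϑ s))
    (hzero : ∀ x, ϑ 0 x = x) (hgroup : ∀ (s t : ℝ) (x : 𝒳), ϑ s (ϑ t x) = ϑ (s + t) x)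
    (hEproj : ∀ F : 𝒳 → ℝ, (∃ C, ∀ x, |F x| ≤ C) → Measurable[evalSigma 𝒳 (Iio 0)] F →
      ∀ x, ∫ y, F y ∂(k x) = F x)
    {t : ℝ} {A : Set 𝒳} (hA : MeasurableSet[evalSigma 𝒳 (Iio t)] A) (F : 𝒳 → ℝ) :
    shiftedExpectation k ϑ t (A.indicator F) = A.indicator (shiftedExpectation k ϑ t F) := by
  set B := ϑ (-t) ⁻¹' A
  have hB : MeasurableSet[evalSigma 𝒳 (Iio 0)] B :=
    measurable_shift_of_image_eq hϑmeas (by simp [image_add_right]) hA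
  have hcancel : ϑ (-t) ∘ ϑ t = id := funext fun y => by simp [hgroup, hzero]
  have hcomp : (fun z => A.indicator F (ϑ (-t) z)) = B.indicator (F ∘ ϑ (-t)) :=
    funext fun z => (indicator_comp_right _).symm
  funext y
  rw [shiftedExpectation, hcomp, integral_indicator_of_measureReal_eq_indicator
    (evalSigma_mono (subset_univ _) _ hB)
    (measureReal_eq_indicator_one_of_measurable_Iio_zero hEproj hB _),
    ← indicator_comp_right, ← preimage_comp, hcancel, preimage_id]
  rfl

end

theorem evolutionary_conditional_expectation_general
    {X : Type*} [MeasurableSpace X]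
    (𝒳 : Set (ℝ → X)) (ϑ : ℝ → 𝒳 → 𝒳)
    (hzero : ∀ x, ϑ 0 x = x)
    (hgroup : ∀ (s t : ℝ) (x : 𝒳), ϑ s (ϑ t x) = ϑ (s + t) x)
    (hϑmeas : ∀ (s : ℝ) (I : Set ℝ),
      @Measurable 𝒳 𝒳 (evalSigma 𝒳 ((fun r => r + s) '' I)) (evalSigma 𝒳 I) (ϑ s))
    (k : 𝒳 → @Measure 𝒳 (evalSigma 𝒳 Set.univ))
    (hprob : ∀ x, IsProbabilityMeasure (k x))
    (hEmeas : ∀ F : 𝒳 → ℝ, (∃ C, ∀ x, |F x| ≤ C) →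
      @Measurable 𝒳 ℝ (evalSigma 𝒳 Set.univ) _ F →
      @Measurable 𝒳 ℝ (evalSigma 𝒳 (Set.Iio 0)) _ (fun x => ∫ y, F y ∂(k x)))
    (hEproj : ∀ F : 𝒳 → ℝ, (∃ C, ∀ x, |F x| ≤ C) →
      @Measurable 𝒳 ℝ (evalSigma 𝒳 (Set.Iio 0)) _ F →
      ∀ x, ∫ y, F y ∂(k x) = F x)
    (hhom : ∀ t : ℝ, 0 ≤ t → ∀ F : 𝒳 → ℝ, (∃ C, ∀ x, |F x| ≤ C) →
      @Measurable 𝒳 ℝ (evalSigma 𝒳 Set.univ) _ F →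
      ∀ x, ∫ y, (∫ z, F (ϑ (-t) z) ∂(k (ϑ t y))) ∂(k x) = ∫ y, F y ∂(k x)) :
    ∀ F : 𝒳 → ℝ, (∃ C, ∀ x, |F x| ≤ C) →
      @Measurable 𝒳 ℝ (evalSigma 𝒳 Set.univ) _ F →
      ∀ t : ℝ, 0 ≤ t → ∀ x : 𝒳,
        @Measurable 𝒳 ℝ (evalSigma 𝒳 (Set.Iio t)) _
          (fun y => ∫ z, F (ϑ (-t) z) ∂(k (ϑ t y))) ∧
        ∀ A : Set 𝒳, MeasurableSet[evalSigma 𝒳 (Set.Iio t)] A →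
          ∫ y in A, (∫ z, F (ϑ (-t) z) ∂(k (ϑ t y))) ∂(k x) = ∫ y in A, F y ∂(k x) := by
  intro F hFbd hFmeas t ht x
  refine ⟨measurable_shiftedExpectation hϑmeas hEmeas hFbd hFmeas t, fun A hA => ?_⟩
  have hAU : MeasurableSet[evalSigma 𝒳 univ] A := evalSigma_mono (subset_univ _) _ hA
  have hAFbd : ∃ C, ∀ z, |A.indicator F z| ≤ C := by
    obtain ⟨C, hC⟩ := hFbd
    exact ⟨C, fun z => (Real.norm_eq_abs _ ▸ norm_indicator_le_norm_self F z).trans (hC z)⟩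
  calc ∫ y in A, shiftedExpectation k ϑ t F y ∂(k x)
      = ∫ y, A.indicator (shiftedExpectation k ϑ t F) y ∂(k x) := (integral_indicator hAU).symm
    _ = ∫ y, shiftedExpectation k ϑ t (A.indicator F) y ∂(k x) := by
        rw [shiftedExpectation_indicator hϑmeas hzero hgroup hEproj hA]
    _ = ∫ y, A.indicator F y ∂(k x) := hhom t ht _ hAFbd (hFmeas.indicator hAU) x
    _ = ∫ y in A, F y ∂(k x) := integral_indicator hAU

/-- Let `𝕋` be an evolutionary semigroup with homogeneous expectation operator `𝔼`,
whose kernel is `k`; write `ℙ^x := k(x, ·)`.  Then for every bounded measurable `F` and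
`t ≥ 0`, the conditional expectation of `F` given `ℱ_{t−}` under `ℙ^x` is `ℙ^x`-a.s.
equal to `𝔼_t F`, where `(𝔼_t F)(y) = ∫ F (ϑ_{−t} z) k(ϑ_t y, dz)`; formalized via the
defining property of conditional expectation: `𝔼_t F` is `ℱ_{t−}`-measurable and has the
same integral as `F` over every `A ∈ ℱ_{t−}`. -/
theorem evolutionary_conditional_expectation
    {X : Type*} [MetricSpace X] [CompleteSpace X]
    [TopologicalSpace.SeparableSpace X] [MeasurableSpace X] [BorelSpace X]
    (𝒳 : Set (ℝ → X)) (ϑ : ℝ → 𝒳 → 𝒳)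
    (hϑ : ∀ (t : ℝ) (x : 𝒳) (s : ℝ), (ϑ t x).1 s = x.1 (t + s))
    (hzero : ∀ x, ϑ 0 x = x)
    (hgroup : ∀ (s t : ℝ) (x : 𝒳), ϑ s (ϑ t x) = ϑ (s + t) x)
    (hϑmeas : ∀ (s : ℝ) (I : Set ℝ),
      @Measurable 𝒳 𝒳 (evalSigma 𝒳 ((fun r => r + s) '' I)) (evalSigma 𝒳 I) (ϑ s))
    (k : 𝒳 → @Measure 𝒳 (evalSigma 𝒳 Set.univ))
    (hprob : ∀ x, IsProbabilityMeasure (k x))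
    (hkmeas : ∀ A : Set 𝒳, MeasurableSet[evalSigma 𝒳 Set.univ] A →
      @Measurable 𝒳 ℝ≥0∞ (evalSigma 𝒳 Set.univ) _ (fun x => k x A))
    (hEmeas : ∀ F : 𝒳 → ℝ, (∃ C, ∀ x, |F x| ≤ C) →
      @Measurable 𝒳 ℝ (evalSigma 𝒳 Set.univ) _ F →
      @Measurable 𝒳 ℝ (evalSigma 𝒳 (Set.Iio 0)) _ (fun x => ∫ y, F y ∂(k x)))
    (hEproj : ∀ F : 𝒳 → ℝ, (∃ C, ∀ x, |F x| ≤ C) →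
      @Measurable 𝒳 ℝ (evalSigma 𝒳 (Set.Iio 0)) _ F →
      ∀ x, ∫ y, F y ∂(k x) = F x)
    (hhom : ∀ t : ℝ, 0 ≤ t → ∀ F : 𝒳 → ℝ, (∃ C, ∀ x, |F x| ≤ C) →
      @Measurable 𝒳 ℝ (evalSigma 𝒳 Set.univ) _ F →
      ∀ x, ∫ y, (∫ z, F (ϑ (-t) z) ∂(k (ϑ t y))) ∂(k x) = ∫ y, F y ∂(k x)) :
    ∀ F : 𝒳 → ℝ, (∃ C, ∀ x, |F x| ≤ C) →
      @Measurable 𝒳 ℝ (evalSigma 𝒳 Set.univ) _ F →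
      ∀ t : ℝ, 0 ≤ t → ∀ x : 𝒳,
        @Measurable 𝒳 ℝ (evalSigma 𝒳 (Set.Iio t)) _
          (fun y => ∫ z, F (ϑ (-t) z) ∂(k (ϑ t y))) ∧
        ∀ A : Set 𝒳, MeasurableSet[evalSigma 𝒳 (Set.Iio t)] A →
          ∫ y in A, (∫ z, F (ϑ (-t) z) ∂(k (ϑ t y))) ∂(k x) = ∫ y in A, F y ∂(k x) :=
  evolutionary_conditional_expectation_general 𝒳 ϑ hzero hgroup hϑmeas k hprob hEmeas hEproj hhom
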